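/- arXiv:2403.09184 — 2 statements merged into one kernel-verified Lean document; each statement's English description precedes it below -/
import Mathlib

section
/- For any end component (R,B) of the MDP M, exactly one of the following holds: (1) the pair (R^c, B^c) with R^c = collapsed(R) and B^c = B ∩ Act^c is an end component of the collapsed MDP M^c, or (2) there is a representative state s_{(R',B')} ∈ S^c with R ⊆ R' and B ⊆ B'. -/
/-!
STATEMENT 3: For any end component (R₀,B₀) of M, exactly one of the following
holds: (1) (collapsed(R₀), B₀ ∩ Act^c) is an end component of the collapsed MDP
M^c, or (2) there is a representative state s_{(R_i,B_i)} with R₀ ⊆ R_i and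
B₀ ⊆ B_i.
-/

open Finset
open scoped Classical

/-- A finite MDP with per-state disjoint action sets: `stOf` assigns to every
action the unique state at which it is available. -/
structure MDP (S A : Type) [Fintype S] [DecidableEq S] [Fintype A] [DecidableEq A] where
  act : S → Finset A
  act_ne : ∀ s, (act s).Nonempty
  stOf : A → S
  stOf_spec : ∀ s a, a ∈ act s → stOf a = s
  P : S → A → S → ℝ
  P_nonneg : ∀ s a s', 0 ≤ P s a s'
  P_sum : ∀ s, ∀ a ∈ act s, ∑ s', P s a s' = 1

/-- A finite path of length `N`: states `st 0, …, st N` and actions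
`ac 0, …, ac (N−1)`, each action available and each transition of positive
probability. -/
def IsPath {σ α : Type*} (act : σ → Finset α) (P : σ → α → σ → ℝ)
    (N : ℕ) (st : ℕ → σ) (ac : ℕ → α) : Prop :=
  ∀ k, k < N → ac k ∈ act (st k) ∧ 0 < P (st k) (ac k) (st (k + 1))

/-- One step inside the sub-system `(R, B)`. -/
def stepIn {σ α : Type*} (act : σ → Finset α) (P : σ → α → σ → ℝ)
    (R : Finset σ) (B : Finset α) (x y : σ) : Prop :=
  x ∈ R ∧ y ∈ R ∧ ∃ a ∈ B, a ∈ act x ∧ 0 < P x a y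

/-- End component. -/
def IsEC {σ α : Type*} (act : σ → Finset α) (P : σ → α → σ → ℝ)
    (R : Finset σ) (B : Finset α) : Prop :=
  R.Nonempty ∧ B.Nonempty ∧
  (∀ a ∈ B, ∃ s ∈ R, a ∈ act s) ∧
  (∀ s ∈ R, ∀ a ∈ B, a ∈ act s → ∀ s', 0 < P s a s' → s' ∈ R) ∧
  (∀ s ∈ R, ∀ s' ∈ R, Relation.ReflTransGen (stepIn act P R B) s s')

/-- Maximal end component. -/
def IsMEC {σ α : Type*} (act : σ → Finset α) (P : σ → α → σ → ℝ)
    (R : Finset σ) (B : Finset α) : Prop :=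
  IsEC act P R B ∧
  ∀ R' B', IsEC act P R' B' → R ⊆ R' → B ⊆ B' → R = R' ∧ B = B'

/-- The state space of the collapsed MDP (before restricting to valid states):
original states, representative states `s_{(R_i,B_i)}` (one per collapsed EC), and
the two fresh states `s₊` (`Sum.inr true`) and `s₋` (`Sum.inr false`). -/
abbrev CS (S : Type) (n : ℕ) : Type := (S ⊕ Fin n) ⊕ Bool

/-- The action alphabet of the collapsed MDP: original actions, the `rem_i`
actions (one per collapsed EC), and the self-loop actions `a₊` (`Sum.inr true`)
and `a₋` (`Sum.inr false`). -/
abbrev CA (A : Type) (n : ℕ) : Type := (A ⊕ Fin n) ⊕ Bool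

variable {S A : Type} [Fintype S] [DecidableEq S] [Fintype A] [DecidableEq A] {n : ℕ}

/-- A collapsed state is valid if it is not an original state belonging to one of
the collapsed ECs. -/
def Valid (R : Fin n → Finset S) (x : CS S n) : Prop :=
  ∀ s : S, x = Sum.inl (Sum.inl s) → ∀ i, s ∉ R i

instance {R : Fin n → Finset S} : DecidablePred (Valid R) := fun x =>
  inferInstanceAs (Decidable (∀ s : S, x = Sum.inl (Sum.inl s) → ∀ i, s ∉ R i))

/-- The state space `S^c` of the collapsed MDP. -/
abbrev CSv (R : Fin n → Finset S) : Type _ := {x : CS S n // Valid R x}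

/-- `states(s^c)`: the set of original states represented by a collapsed state. -/
def statesOf (R : Fin n → Finset S) : CS S n → Finset S
  | Sum.inl (Sum.inl s) => {s}
  | Sum.inl (Sum.inr i) => R i
  | Sum.inr _ => ∅

/-- The map `collapsed : S → S^c`, sending a state to its representative if it
belongs to a collapsed EC and to itself otherwise. -/
noncomputable def collapseV (R : Fin n → Finset S) (s : S) : CSv R :=
  if h : ∃ i, s ∈ R i then
    ⟨Sum.inl (Sum.inr (Classical.choose h)), by intro t ht; simp at ht⟩
  else
    ⟨Sum.inl (Sum.inl s), by
      intro t ht i hi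
      simp only [Sum.inl.injEq] at ht
      subst ht
      exact h ⟨i, hi⟩⟩

/-- The terminal states `s₊ = term R true` and `s₋ = term R false` of the
collapsed MDP. -/
def term (R : Fin n → Finset S) (b : Bool) : CSv R :=
  ⟨Sum.inr b, by intro t ht; simp at ht⟩

/-- The representative state `s_{(R_i,B_i)}` of the `i`-th collapsed EC. -/
def repV (R : Fin n → Finset S) (i : Fin n) : CSv R :=
  ⟨Sum.inl (Sum.inr i), by intro t ht; simp at ht⟩

/-- The available actions `A^c` of the collapsed MDP. -/
noncomputable def cAct (M : MDP S A) (R : Fin n → Finset S) (B : Fin n → Finset A) :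
    CSv R → Finset (CA A n) := fun x =>
  match x.1 with
  | Sum.inl (Sum.inl s) => (M.act s).image fun a => Sum.inl (Sum.inl a)
  | Sum.inl (Sum.inr i) =>
      insert (Sum.inl (Sum.inr i))
        (((R i).biUnion M.act \ B i).image fun a => Sum.inl (Sum.inl a))
  | Sum.inr b => {Sum.inr b}

/-- The transition function `Δ^c` of the collapsed MDP: an original action keeps
its distribution (aggregated over the represented states), `rem_i` moves to `s₊`
or `s₋` according to whether the `i`-th EC contains a target state, and `a₊`, `a₋`
are self-loops. -/
noncomputable def cP (M : MDP S A) (R : Fin n → Finset S) (T : Finset S) :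
    CSv R → CA A n → CSv R → ℝ := fun _x a y =>
  match a with
  | Sum.inl (Sum.inl a₀) => ∑ s' ∈ statesOf R y.1, M.P (M.stOf a₀) a₀ s'
  | Sum.inl (Sum.inr i) =>
      if (R i ∩ T).Nonempty then (if y = term R true then 1 else 0)
      else (if y = term R false then 1 else 0)
  | Sum.inr b => if y = term R b then 1 else 0


section Aux

lemma ec_stOf (M : MDP S A) {R' : Finset S} {B' : Finset A}
    (h : IsEC M.act M.P R' B') {a : A} (ha : a ∈ B') :
    M.stOf a ∈ R' ∧ a ∈ M.act (M.stOf a) := by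
  obtain ⟨s, hs, hact⟩ := h.2.2.1 a ha
  rw [M.stOf_spec s a hact]
  exact ⟨hs, hact⟩

lemma idx_eq_of_mem {R : Fin n → Finset S}
    (hdisj : ∀ i j, i ≠ j → Disjoint (R i) (R j)) {s : S} {i j : Fin n}
    (hi : s ∈ R i) (hj : s ∈ R j) : i = j := by
  by_contra h
  exact Finset.disjoint_left.mp (hdisj i j h) hi hj

lemma collapseV_eq_rep (R : Fin n → Finset S)
    (hdisj : ∀ i j, i ≠ j → Disjoint (R i) (R j)) {s : S} {i : Fin n}
    (h : s ∈ R i) : collapseV R s = repV R i := by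
  have hex : ∃ j, s ∈ R j := ⟨i, h⟩
  have hspec := Classical.choose_spec hex
  have hji : Classical.choose hex = i := idx_eq_of_mem hdisj hspec h
  rw [collapseV, dif_pos hex]
  apply Subtype.ext
  simp [repV, hji]

lemma collapseV_fst_of_not_mem (R : Fin n → Finset S) {s : S}
    (h : ¬ ∃ i, s ∈ R i) : (collapseV R s).1 = Sum.inl (Sum.inl s) := by
  rw [collapseV, dif_neg h]

lemma cAct_orig (M : MDP S A) (R : Fin n → Finset S) (B : Fin n → Finset A)
    (x : CSv R) (s : S) (h : x.1 = Sum.inl (Sum.inl s)) :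
    cAct M R B x = (M.act s).image (fun a => Sum.inl (Sum.inl a)) := by
  rcases x with ⟨v, hv⟩
  simp only at h
  subst h
  rfl

lemma cAct_rep (M : MDP S A) (R : Fin n → Finset S) (B : Fin n → Finset A)
    (i : Fin n) :
    cAct M R B (repV R i) =
      insert (Sum.inl (Sum.inr i))
        (((R i).biUnion M.act \ B i).image fun a => Sum.inl (Sum.inl a)) := rfl

lemma mem_statesOf_collapseV (R : Fin n → Finset S) (s : S) :
    s ∈ statesOf R (collapseV R s).1 := by
  by_cases h : ∃ i, s ∈ R i
  · rw [collapseV, dif_pos h]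
    exact Classical.choose_spec h
  · rw [collapseV_fst_of_not_mem R h]
    simp [statesOf]

lemma collapseV_of_mem_statesOf (R : Fin n → Finset S)
    (hdisj : ∀ i j, i ≠ j → Disjoint (R i) (R j)) {y : CSv R} {s : S}
    (h : s ∈ statesOf R y.1) : collapseV R s = y := by
  obtain ⟨v, hv⟩ := y
  match v, hv with
  | Sum.inl (Sum.inl t), hv =>
    simp only [statesOf, Finset.mem_singleton] at h
    subst h
    have hnot : ¬ ∃ i, s ∈ R i := by
      rintro ⟨i, hi⟩
      exact hv s rfl i hi
    apply Subtype.ext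
    exact collapseV_fst_of_not_mem R hnot
  | Sum.inl (Sum.inr i), hv =>
    exact collapseV_eq_rep R hdisj h
  | Sum.inr b, hv =>
    simp [statesOf] at h

lemma rtg_mem_of_mem (M : MDP S A) (R : Fin n → Finset S) (B : Fin n → Finset A)
    (hEC : ∀ i, IsEC M.act M.P (R i) (B i))
    (hdisj : ∀ i j, i ≠ j → Disjoint (R i) (R j))
    {R₀ : Finset S} {B₀ : Finset A}
    (hB : ∀ a ∈ B₀, ∃ j, a ∈ B j) {i : Fin n} {x y : S}
    (hx : x ∈ R i) (h : Relation.ReflTransGen (stepIn M.act M.P R₀ B₀) x y) :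
    y ∈ R i := by
  induction h with
  | refl => exact hx
  | tail h1 h2 ih =>
    obtain ⟨hbR, hcR, a, haB₀, haAct, hpos⟩ := h2
    obtain ⟨j, haBj⟩ := hB a haB₀
    obtain ⟨hst, _⟩ := ec_stOf M (hEC j) haBj
    rw [M.stOf_spec _ a haAct] at hst
    have hji : j = i := idx_eq_of_mem hdisj hst ih
    subst hji
    exact (hEC j).2.2.2.1 _ ih a haBj haAct _ hpos

lemma subset_of_B_subset_union (M : MDP S A) (R : Fin n → Finset S)
    (B : Fin n → Finset A)
    (hEC : ∀ i, IsEC M.act M.P (R i) (B i))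
    (hdisj : ∀ i j, i ≠ j → Disjoint (R i) (R j))
    {R₀ : Finset S} {B₀ : Finset A} (hEC₀ : IsEC M.act M.P R₀ B₀)
    (hB : ∀ a ∈ B₀, ∃ j, a ∈ B j) : ∃ i, R₀ ⊆ R i ∧ B₀ ⊆ B i := by
  obtain ⟨a₀, ha₀⟩ := hEC₀.2.1
  obtain ⟨i, ha₀i⟩ := hB a₀ ha₀
  obtain ⟨hs₀i, _⟩ := ec_stOf M (hEC i) ha₀i
  obtain ⟨hs₀R₀, _⟩ := ec_stOf M hEC₀ ha₀
  have hRsub : R₀ ⊆ R i := by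
    intro s' hs'
    exact rtg_mem_of_mem M R B hEC hdisj hB hs₀i
      (hEC₀.2.2.2.2 _ hs₀R₀ s' hs')
  refine ⟨i, hRsub, ?_⟩
  intro a ha
  obtain ⟨j, haj⟩ := hB a ha
  obtain ⟨hstj, _⟩ := ec_stOf M (hEC j) haj
  obtain ⟨hstR₀, _⟩ := ec_stOf M hEC₀ ha
  have : j = i := idx_eq_of_mem hdisj hstj (hRsub hstR₀)
  exact this ▸ haj

end Aux

/-- EC correspondence from `M` to the collapsed MDP `M^c`. -/
theorem ec_correspondence_normal_to_collapse (M : MDP S A) (n : ℕ) (R : Fin n → Finset S) (B : Fin n → Finset A)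
    (hEC : ∀ i, IsEC M.act M.P (R i) (B i))
    (hdisj : ∀ i j, i ≠ j → Disjoint (R i) (R j))
    (T : Finset S)
    (Mc : MDP (CSv R) (CA A n))
    (Hact : ∀ x, Mc.act x = cAct M R B x)
    (HP : ∀ x a y, Mc.P x a y = cP M R T x a y)
    (R₀ : Finset S) (B₀ : Finset A) (hEC₀ : IsEC M.act M.P R₀ B₀) :
    Xor'
      (IsEC Mc.act Mc.P (R₀.image (collapseV R))
        ((B₀ \ Finset.univ.biUnion B).image fun a => (Sum.inl (Sum.inl a) : CA A n)))
      (∃ i, R₀ ⊆ R i ∧ B₀ ⊆ B i) := by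
  classical
  by_cases hQ : ∃ i, R₀ ⊆ R i ∧ B₀ ⊆ B i
  · right
    refine ⟨hQ, ?_⟩
    intro hP
    obtain ⟨i, hRi, hBi⟩ := hQ
    have hempty : B₀ \ Finset.univ.biUnion B = ∅ := by
      apply Finset.eq_empty_of_forall_notMem
      intro a ha
      rw [Finset.mem_sdiff] at ha
      exact ha.2 (Finset.mem_biUnion.mpr ⟨i, Finset.mem_univ i, hBi ha.1⟩)
    have hne := hP.2.1
    rw [hempty] at hne
    simp at hne
  · left
    refine ⟨?_, hQ⟩
    have hex : ∃ a ∈ B₀, ∀ j, a ∉ B j := by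
      by_contra hcon
      push_neg at hcon
      exact hQ (subset_of_B_subset_union M R B hEC hdisj hEC₀ hcon)
    -- membership characterization for the collapsed action set
    have memBc : ∀ ac : CA A n,
        ac ∈ (B₀ \ Finset.univ.biUnion B).image
          (fun a => (Sum.inl (Sum.inl a) : CA A n)) ↔
        ∃ a, (a ∈ B₀ ∧ ∀ j, a ∉ B j) ∧ (Sum.inl (Sum.inl a) : CA A n) = ac := by
      intro ac
      simp [Finset.mem_image, Finset.mem_sdiff, Finset.mem_biUnion]
    -- an original action available at the collapsed state of its source
    have hactC : ∀ a : A, a ∈ B₀ → (∀ j, a ∉ B j) →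
        (Sum.inl (Sum.inl a) : CA A n) ∈ Mc.act (collapseV R (M.stOf a)) := by
      intro a haB₀ haNot
      obtain ⟨hsR₀, hact⟩ := ec_stOf M hEC₀ haB₀
      rw [Hact]
      by_cases hmem : ∃ i, M.stOf a ∈ R i
      · obtain ⟨i, hi⟩ := hmem
        rw [collapseV_eq_rep R hdisj hi, cAct_rep]
        apply Finset.mem_insert_of_mem
        apply Finset.mem_image.mpr
        exact ⟨a, Finset.mem_sdiff.mpr
          ⟨Finset.mem_biUnion.mpr ⟨_, hi, hact⟩, haNot i⟩, rfl⟩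
      · rw [cAct_orig M R B _ _ (collapseV_fst_of_not_mem R hmem)]
        exact Finset.mem_image.mpr ⟨a, hact, rfl⟩
    refine ⟨hEC₀.1.image _, ?_, ?_, ?_, ?_⟩
    · obtain ⟨a, haB₀, haNot⟩ := hex
      exact ⟨Sum.inl (Sum.inl a), (memBc _).mpr ⟨a, ⟨haB₀, haNot⟩, rfl⟩⟩
    · intro ac hac
      obtain ⟨a, ⟨haB₀, haNot⟩, rfl⟩ := (memBc ac).mp hac
      obtain ⟨hsR₀, hact⟩ := ec_stOf M hEC₀ haB₀
      exact ⟨collapseV R (M.stOf a), Finset.mem_image.mpr ⟨_, hsR₀, rfl⟩,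
        hactC a haB₀ haNot⟩
    · intro x hx ac hac hacAct y hpos
      obtain ⟨a, ⟨haB₀, haNot⟩, rfl⟩ := (memBc ac).mp hac
      rw [HP] at hpos
      have hpos' : ∃ s' ∈ statesOf R y.1, 0 < M.P (M.stOf a) a s' := by
        by_contra hcon
        push_neg at hcon
        have hle : (∑ s' ∈ statesOf R y.1, M.P (M.stOf a) a s') ≤ 0 := by
          apply Finset.sum_nonpos
          intro s' hs'
          exact (hcon s' hs')
        exact absurd hpos (by simpa [cP] using not_lt.mpr hle)
      obtain ⟨s', hs'mem, hs'pos⟩ := hpos'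
      obtain ⟨hsR₀, hact⟩ := ec_stOf M hEC₀ haB₀
      have hs'R₀ : s' ∈ R₀ := hEC₀.2.2.2.1 _ hsR₀ a haB₀ hact s' hs'pos
      exact Finset.mem_image.mpr ⟨s', hs'R₀,
        collapseV_of_mem_statesOf R hdisj hs'mem⟩
    · -- connectivity
      have mapStep : ∀ u v : S, stepIn M.act M.P R₀ B₀ u v →
          Relation.ReflTransGen
            (stepIn Mc.act Mc.P (R₀.image (collapseV R))
              ((B₀ \ Finset.univ.biUnion B).image
                fun a => (Sum.inl (Sum.inl a) : CA A n)))
            (collapseV R u) (collapseV R v) := by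
        intro u v hstep
        obtain ⟨hu, hv, a, haB₀, haAct, hpos⟩ := hstep
        have hstu : M.stOf a = u := M.stOf_spec _ a haAct
        by_cases hj : ∃ j, a ∈ B j
        · obtain ⟨j, haj⟩ := hj
          obtain ⟨hstj, _⟩ := ec_stOf M (hEC j) haj
          rw [hstu] at hstj
          have hvj : v ∈ R j := (hEC j).2.2.2.1 _ hstj a haj haAct v hpos
          rw [collapseV_eq_rep R hdisj hstj, collapseV_eq_rep R hdisj hvj]
        · push_neg at hj
          apply Relation.ReflTransGen.single
          refine ⟨Finset.mem_image.mpr ⟨u, hu, rfl⟩,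
            Finset.mem_image.mpr ⟨v, hv, rfl⟩,
            Sum.inl (Sum.inl a), (memBc _).mpr ⟨a, ⟨haB₀, hj⟩, rfl⟩, ?_, ?_⟩
          · have := hactC a haB₀ hj
            rwa [hstu] at this
          · rw [HP]
            show 0 < ∑ s' ∈ statesOf R (collapseV R v).1, M.P (M.stOf a) a s'
            refine Finset.sum_pos' (fun s' _ => M.P_nonneg _ _ _)
              ⟨v, mem_statesOf_collapseV R v, ?_⟩
            rwa [hstu]
      intro x hx y hy
      obtain ⟨s, hs, rfl⟩ := Finset.mem_image.mp hx
      obtain ⟨s', hs', rfl⟩ := Finset.mem_image.mp hy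
      have hrtg := hEC₀.2.2.2.2 s hs s' hs'
      clear hs' hs
      induction hrtg with
      | refl => exact Relation.ReflTransGen.refl
      | tail h1 h2 ih => exact (ih (Finset.mem_image.mpr ⟨_, h2.1, rfl⟩)).trans (mapStep _ _ h2)
end

section
/- For any finite Markov chain (S,δ) and state s ∈ S, we have sup_{N∈ℕ} P_s[◇^{≤N} B] = 1, where B ⊆ S is the union of the state sets of all bottom strongly connected components of the chain; that is, with probability 1 a run started in s eventually enters (and, since BSCCs have no outgoing transitions, then forever remains in) some BSCC. -/
/-!
STATEMENT 19: For any finite Markov chain and state s, the supremum over N of the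
N-step bounded probability of reaching the union B of all bottom strongly connected
components equals 1.
-/

open Finset
open scoped Classical

/-- A finite Markov chain: a transition function assigning to each state a
probability distribution over states. -/
structure MC (S : Type) [Fintype S] where
  P : S → S → ℝ
  P_nonneg : ∀ s s', 0 ≤ P s s'
  P_sum : ∀ s, ∑ s', P s s' = 1

variable {S : Type} [Fintype S] [DecidableEq S] [Nonempty S]

/-- Step-bounded reachability probability `P_s[◇^{≤N} T]`, defined recursively. -/
noncomputable def reachN (M : MC S) (T : Set S) : ℕ → S → ℝ
  | 0, s => if s ∈ T then 1 else 0
  | N + 1, s => if s ∈ T then 1 else ∑ s', M.P s s' * reachN M T N s'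

/-- Unbounded reachability probability `P_s[◇ T] = sup_N P_s[◇^{≤N} T]`. -/
noncomputable def reach (M : MC S) (T : Set S) (s : S) : ℝ :=
  ⨆ N, reachN M T N s

/-- The minimal positive transition probability of the chain. -/
noncomputable def dmin (M : MC S) : ℝ :=
  sInf {p : ℝ | ∃ s s', 0 < M.P s s' ∧ M.P s s' = p}


/-- A nonempty set of states is strongly connected if every state of it can reach
every other (and itself) via a nontrivial path of positive-probability transitions. -/
def IsSC (M : MC S) (C : Finset S) : Prop :=
  C.Nonempty ∧ ∀ s ∈ C, ∀ s' ∈ C, Relation.TransGen (fun x y => 0 < M.P x y) s s'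

/-- A strongly connected component: an inclusion-maximal strongly connected set. -/
def IsSCC (M : MC S) (C : Finset S) : Prop :=
  IsSC M C ∧ ∀ C', IsSC M C' → C ⊆ C' → C = C'

/-- A bottom strongly connected component: an SCC without outgoing transitions. -/
def IsBSCC (M : MC S) (C : Finset S) : Prop :=
  IsSCC M C ∧ ∀ s ∈ C, ∀ s', s' ∉ C → M.P s s' = 0

set_option linter.unusedSectionVars false

lemma reachN_nonneg (M : MC S) (T : Set S) : ∀ n s, 0 ≤ reachN M T n s := by
  intro n
  induction n with
  | zero => intro s; simp only [reachN]; split <;> norm_num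
  | succ n ih =>
    intro s; simp only [reachN]; split
    · norm_num
    · exact Finset.sum_nonneg fun t _ => mul_nonneg (M.P_nonneg s t) (ih t)

lemma reachN_le_one (M : MC S) (T : Set S) : ∀ n s, reachN M T n s ≤ 1 := by
  intro n
  induction n with
  | zero => intro s; simp only [reachN]; split <;> norm_num
  | succ n ih =>
    intro s; simp only [reachN]; split
    · norm_num
    · calc ∑ t, M.P s t * reachN M T n t ≤ ∑ t, M.P s t * 1 :=
            Finset.sum_le_sum fun t _ =>
              mul_le_mul_of_nonneg_left (ih t) (M.P_nonneg s t)
        _ = 1 := by simp [M.P_sum s]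

lemma reachN_mem (M : MC S) (T : Set S) (n : ℕ) {s : S} (hs : s ∈ T) :
    reachN M T n s = 1 := by
  cases n <;> simp [reachN, hs]

lemma reachN_mono (M : MC S) (T : Set S) : ∀ n s, reachN M T n s ≤ reachN M T (n+1) s := by
  intro n
  induction n with
  | zero =>
    intro s
    by_cases hs : s ∈ T
    · simp [reachN, hs]
    · simp only [reachN, if_neg hs]
      exact Finset.sum_nonneg fun t _ => mul_nonneg (M.P_nonneg s t) (reachN_nonneg M T 0 t)
  | succ n ih =>
    intro s
    by_cases hs : s ∈ T
    · simp [reachN, hs]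
    · simp only [reachN, if_neg hs]
      exact Finset.sum_le_sum fun t _ => mul_le_mul_of_nonneg_left (ih t) (M.P_nonneg s t)

lemma reachN_mono' (M : MC S) (T : Set S) {a b : ℕ} (h : a ≤ b) (s : S) :
    reachN M T a s ≤ reachN M T b s := by
  induction b with
  | zero => simp [Nat.le_zero.mp h]
  | succ b ih =>
    rcases Nat.lt_or_ge a (b+1) with h' | h'
    · exact (ih (Nat.lt_succ_iff.mp h')).trans (reachN_mono M T b s)
    · have : a = b + 1 := le_antisymm h h'
      simp [this]

set_option linter.unusedSectionVars false


lemma exists_pos_step (M : MC S) (s : S) : ∃ s', 0 < M.P s s' := by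
  by_contra h
  push_neg at h
  have hz : ∀ s', M.P s s' = 0 := fun s' => le_antisymm (h s') (M.P_nonneg s s')
  have hsum := M.P_sum s
  rw [Finset.sum_congr rfl (fun x _ => hz x)] at hsum
  simp at hsum

lemma exists_bscc_reach (M : MC S) (s : S) :
    ∃ t, Relation.ReflTransGen (fun x y => 0 < M.P x y) s t ∧
      ∃ C : Finset S, IsBSCC M C ∧ t ∈ C := by
  set r : S → S → Prop := fun x y => 0 < M.P x y with hr
  set Rset : S → Finset S := fun t => univ.filter (fun u => Relation.ReflTransGen r t u)
    with hRset
  have hmemR : ∀ t u, u ∈ Rset t ↔ Relation.ReflTransGen r t u := by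
    intro t u; simp [hRset]
  set A : Finset S := univ.filter (fun u => Relation.ReflTransGen r s u) with hA
  have hsA : s ∈ A := by simp [hA, Relation.ReflTransGen.refl]
  obtain ⟨t, htA, htmin⟩ := Finset.exists_min_image A (fun u => (Rset u).card) ⟨s, hsA⟩
  have hst : Relation.ReflTransGen r s t := by simpa [hA] using htA
  have hback : ∀ u, Relation.ReflTransGen r t u → Relation.ReflTransGen r u t := by
    intro u htu
    have huA : u ∈ A := by simp only [hA, Finset.mem_filter, Finset.mem_univ, true_and]; exact hst.trans htu
    have hsub : Rset u ⊆ Rset t := by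
      intro v hv
      rw [hmemR] at hv ⊢
      exact htu.trans hv
    have hcard : (Rset t).card ≤ (Rset u).card := htmin u huA
    have heq : Rset u = Rset t := Finset.eq_of_subset_of_card_le hsub hcard
    have : t ∈ Rset u := by rw [heq, hmemR]
    rwa [hmemR] at this
  set C : Finset S := Rset t with hC
  have htC : t ∈ C := by rw [hC, hmemR]
  have hclosed : ∀ u ∈ C, ∀ v, r u v → v ∈ C := by
    intro u hu v huv
    rw [hC, hmemR] at hu ⊢
    exact hu.trans (Relation.ReflTransGen.single huv)
  have hSC : IsSC M C := by
    refine ⟨⟨t, htC⟩, ?_⟩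
    intro u hu u' hu'
    rw [hC, hmemR] at hu hu'
    have h1 : Relation.ReflTransGen r u u' := (hback u hu).trans hu'
    obtain ⟨v, hv⟩ := exists_pos_step M u
    have hvC : v ∈ C := hclosed u (by rw [hC, hmemR]; exact hu) v hv
    have hvu' : Relation.ReflTransGen r v u' := ((hback v (by rwa [hmemR] at hvC)).trans hu')
    exact Relation.TransGen.head' hv hvu'
  refine ⟨t, hst, C, ⟨⟨hSC, ?_⟩, ?_⟩, htC⟩
  · intro C' hC' hsub
    refine Finset.Subset.antisymm hsub ?_
    intro u hu
    have : Relation.TransGen r t u := hC'.2 t (hsub htC) u hu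
    rw [hC, hmemR]
    exact this.to_reflTransGen
  · intro u hu v hv
    by_contra h
    have : 0 < M.P u v := lt_of_le_of_ne (M.P_nonneg u v) (Ne.symm h)
    exact hv (hclosed u hu v this)

lemma pos_reach (M : MC S) (T : Set S) {s t : S}
    (h : Relation.ReflTransGen (fun x y => 0 < M.P x y) s t) (ht : t ∈ T) :
    ∃ L, 0 < reachN M T L s := by
  induction h using Relation.ReflTransGen.head_induction_on with
  | refl => exact ⟨0, by simp [reachN, ht]⟩
  | head hab _ ih =>
    rename_i a b hbt
    obtain ⟨L, hL⟩ := ih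
    by_cases ha : a ∈ T
    · exact ⟨0, by simp [reachN, ha]⟩
    · refine ⟨L + 1, ?_⟩
      simp only [reachN, if_neg ha]
      have : 0 < M.P a b * reachN M T L b := mul_pos hab hL
      calc (0:ℝ) < M.P a b * reachN M T L b := this
        _ ≤ ∑ s', M.P a s' * reachN M T L s' :=
          Finset.single_le_sum
            (fun u _ => mul_nonneg (M.P_nonneg a u) (reachN_nonneg M T L u))
            (Finset.mem_univ b)

/-- Key contraction inequality. -/
lemma reachN_add_ge (M : MC S) (T : Set S) (b : ℕ) (c : ℝ)
    (hc : ∀ u, c ≤ reachN M T b u) (hc0 : 0 ≤ c) :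
    ∀ a s, reachN M T a s + c * (1 - reachN M T a s) ≤ reachN M T (a + b) s := by
  intro a
  induction a with
  | zero =>
    intro s
    by_cases hs : s ∈ T
    · simp [reachN_mem M T _ hs, reachN_mem M T 0 hs]
    · simp only [reachN, if_neg hs, Nat.zero_add]
      calc (0:ℝ) + c * (1 - 0) = c := by ring
        _ ≤ reachN M T b s := hc s
  | succ a ih =>
    intro s
    by_cases hs : s ∈ T
    · simp [reachN_mem M T _ hs]
    · have hab : a + 1 + b = (a + b) + 1 := by ring
      rw [hab]
      simp only [reachN, if_neg hs]
      have step : ∀ u, M.P s u * (reachN M T a u + c * (1 - reachN M T a u))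
          ≤ M.P s u * reachN M T (a + b) u := fun u =>
        mul_le_mul_of_nonneg_left (ih u) (M.P_nonneg s u)
      have h1 : ∀ u, M.P s u * (reachN M T a u + c * (1 - reachN M T a u))
          = M.P s u * reachN M T a u + c * (M.P s u - M.P s u * reachN M T a u) :=
        fun u => by ring
      have key : ∑ u, M.P s u * (reachN M T a u + c * (1 - reachN M T a u))
          = (∑ u, M.P s u * reachN M T a u)
            + c * (1 - ∑ u, M.P s u * reachN M T a u) := by
        simp only [h1]
        rw [Finset.sum_add_distrib, ← Finset.mul_sum, Finset.sum_sub_distrib, M.P_sum s]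
      calc (∑ u, M.P s u * reachN M T a u) + c * (1 - ∑ u, M.P s u * reachN M T a u)
          = ∑ u, M.P s u * (reachN M T a u + c * (1 - reachN M T a u)) := key.symm
          _ ≤ ∑ u, M.P s u * reachN M T (a + b) u := Finset.sum_le_sum fun u _ => step u


/-- With probability 1, a run of a finite Markov chain eventually enters some
bottom strongly connected component. -/
theorem mc_almost_sure_bscc_absorption (M : MC S) (s : S) :
    (⨆ N, reachN M {t | ∃ C : Finset S, IsBSCC M C ∧ t ∈ C} N s) = 1 := by
  set T : Set S := {t | ∃ C : Finset S, IsBSCC M C ∧ t ∈ C} with hT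
  have key : ∀ u : S, ∃ L, 0 < reachN M T L u := by
    intro u
    obtain ⟨t, hut, C, hC, htC⟩ := exists_bscc_reach M u
    exact pos_reach M T hut ⟨C, hC, htC⟩
  choose L hL using key
  set N : ℕ := univ.sup L with hNdef
  have hN : ∀ u, 0 < reachN M T N u := fun u =>
    lt_of_lt_of_le (hL u) (reachN_mono' M T (Finset.le_sup (Finset.mem_univ u)) u)
  set c : ℝ := univ.inf' Finset.univ_nonempty (fun u => reachN M T N u) with hcdef
  have hc_pos : 0 < c := by
    rw [hcdef, Finset.lt_inf'_iff]
    exact fun u _ => hN u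
  have hc_le : ∀ u, c ≤ reachN M T N u := fun u => Finset.inf'_le _ (Finset.mem_univ u)
  have hc1 : c ≤ 1 :=
    (hc_le (Classical.arbitrary S)).trans (reachN_le_one M T N _)
  have iter : ∀ k, ∀ u, 1 - reachN M T (k * N) u ≤ (1 - c) ^ k := by
    intro k
    induction k with
    | zero =>
      intro u
      simp only [Nat.zero_mul, pow_zero]
      linarith [reachN_nonneg M T 0 u]
    | succ k ih =>
      intro u
      have h1 : (k + 1) * N = k * N + N := by ring
      have h2 := reachN_add_ge M T N c hc_le (le_of_lt hc_pos) (k * N) u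
      have h3 : 1 - reachN M T (k * N + N) u ≤ (1 - c) * (1 - reachN M T (k * N) u) := by
        nlinarith [h2]
      rw [h1]
      calc 1 - reachN M T (k * N + N) u
          ≤ (1 - c) * (1 - reachN M T (k * N) u) := h3
        _ ≤ (1 - c) * (1 - c) ^ k :=
            mul_le_mul_of_nonneg_left (ih u) (by linarith)
        _ = (1 - c) ^ (k + 1) := by ring
  have bdd : BddAbove (Set.range (fun n => reachN M T n s)) := by
    refine ⟨1, ?_⟩
    rintro x ⟨n, rfl⟩
    exact reachN_le_one M T n s
  refine le_antisymm (ciSup_le fun n => reachN_le_one M T n s) ?_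
  have hlb : ∀ k : ℕ, 1 - (1 - c) ^ k ≤ ⨆ n, reachN M T n s := by
    intro k
    have := iter k s
    have h4 : 1 - (1 - c) ^ k ≤ reachN M T (k * N) s := by linarith
    exact h4.trans (le_ciSup bdd (k * N))
  have tend : Filter.Tendsto (fun k : ℕ => 1 - (1 - c) ^ k) Filter.atTop (nhds 1) := by
    have h5 : Filter.Tendsto (fun k : ℕ => (1 - c) ^ k) Filter.atTop (nhds 0) :=
      tendsto_pow_atTop_nhds_zero_of_lt_one (by linarith) (by linarith)
    have := Filter.Tendsto.sub (tendsto_const_nhds (x := (1:ℝ))) h5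
    simpa using this
  exact le_of_tendsto' tend hlb
end
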